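/- arXiv:1202.4853 — 4 statements merged into one kernel-verified Lean document; each statement's English description precedes it below -/
import Mathlib

section
/- Let ν ≥ 1/2 be real. Then for all x > 0 one has the Turán type inequality I_ν(x)² − I_{ν−1}(x)·I_{ν+1}(x) < I_ν(x)² / x. -/
open Real

/-- The modified Bessel function of the first kind of real order `ν`,
`I_ν(x) = ∑_{n≥0} (x/2)^(2n+ν) / (n! Γ(n+ν+1))`. -/
noncomputable def besselI (ν x : ℝ) : ℝ :=
  ∑' n : ℕ, (x / 2) ^ (2 * (n : ℝ) + ν) / ((n.factorial : ℝ) * Real.Gamma ((n : ℝ) + ν + 1))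

/-- The modified Bessel function of the second kind of real order `ν`,
`K_ν(x) = ∫_0^∞ e^{-x cosh t} cosh(ν t) dt`. -/
noncomputable def besselK (ν x : ℝ) : ℝ :=
  ∫ t in Set.Ioi (0 : ℝ), Real.exp (-x * Real.cosh t) * Real.cosh (ν * t)

/-!
Write `a = I_ν`, `b = I_{ν+1}` and eliminate `I_{ν-1} = (2ν/t) a + b`. Then
`F(t) = t² (a²/t - (a² - I_{ν-1} b)) = t(1-t) a² + 2νt ab + t² b²` (`turanGap`) tends to `0` as
`t → 0⁺` and `F' = a D` with `D = (2ν+1-2t) a + 2t b` (`turanGapDerivFactor`). Clearly `D > 0` for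
`t ≤ 1/2`, and the weight `eᵗ/√t` kills the `b`-terms of `D'`:
`(eᵗ t^{-1/2} D)' = eᵗ t^{-1/2} (4ν²-1)/(2t) a ≥ 0`. So `D > 0` everywhere and `F` increases
from `0`.
-/

open Filter Set Topology

lemma lt_of_strictMonoOn_of_tendsto_nhdsGT {α β : Type*} [TopologicalSpace α] [LinearOrder α]
    [DenselyOrdered α] [OrderTopology α] [TopologicalSpace β] [LinearOrder β]
    [OrderClosedTopology β] {f : α → β} {a x : α} {b : β} (hf : StrictMonoOn f (Ioi a))
    (hlim : Tendsto f (𝓝[>] a) (𝓝 b)) (hx : a < x) : b < f x := by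
  obtain ⟨m, ham, hmx⟩ := exists_between hx
  have : (𝓝[>] a).NeBot := nhdsGT_neBot_of_exists_gt ⟨x, hx⟩
  have hbm : b ≤ f m := le_of_tendsto hlim <| by
    filter_upwards [Ioo_mem_nhdsGT ham] with t ht using (hf ht.1 ham ht.2).le
  exact hbm.trans_lt (hf ham hx hmx)

lemma strictMonoOn_of_hasDerivAt_pos {D : Set ℝ} (hD : Convex ℝ D) {f f' : ℝ → ℝ}
    (hf : ∀ x ∈ D, HasDerivAt f (f' x) x) (hf' : ∀ x ∈ D, 0 < f' x) : StrictMonoOn f D :=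
  strictMonoOn_of_hasDerivWithinAt_pos hD (fun x hx => (hf x hx).continuousAt.continuousWithinAt)
    (fun x hx => (hf x (interior_subset hx)).hasDerivWithinAt)
    fun x hx => hf' x (interior_subset hx)

lemma monotoneOn_of_hasDerivAt_nonneg {D : Set ℝ} (hD : Convex ℝ D) {f f' : ℝ → ℝ}
    (hf : ∀ x ∈ D, HasDerivAt f (f' x) x) (hf' : ∀ x ∈ D, 0 ≤ f' x) : MonotoneOn f D :=
  monotoneOn_of_hasDerivWithinAt_nonneg hD (fun x hx => (hf x hx).continuousAt.continuousWithinAt)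
    (fun x hx => (hf x (interior_subset hx)).hasDerivWithinAt)
    fun x hx => hf' x (interior_subset hx)

lemma one_le_Gamma {s : ℝ} (hs : 2 ≤ s) : 1 ≤ Gamma s :=
  Gamma_two ▸ Gamma_strictMonoOn_Ici.monotoneOn self_mem_Ici hs hs

/-- The junk value `Γ(-k) = 0` gives the coefficient `y^n / (n! Γ(n+μ+1))` the true value `0` of
`1/Γ` at its poles, so this is the genuine series for every real `μ`. -/
noncomputable def besselIReduced (μ y : ℝ) : ℝ :=
  ∑' n : ℕ, y ^ n / ((n.factorial : ℝ) * Gamma ((n : ℝ) + μ + 1))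

lemma summable_besselIReduced (μ y : ℝ) :
    Summable fun n : ℕ => y ^ n / ((n.factorial : ℝ) * Gamma ((n : ℝ) + μ + 1)) := by
  refine .of_norm_bounded_eventually_nat (summable_pow_div_factorial |y|) ?_
  filter_upwards [eventually_ge_atTop ⌈1 - μ⌉₊] with n hn
  have hΓ : 1 ≤ Gamma ((n : ℝ) + μ + 1) := one_le_Gamma (by linarith [Nat.ceil_le.mp hn])
  rw [norm_div, norm_pow, norm_mul, Real.norm_eq_abs y, Real.norm_natCast,
    Real.norm_of_nonneg (r := Gamma _) (by linarith)]
  gcongr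
  exact le_mul_of_one_le_right (Nat.cast_nonneg _) hΓ

lemma succ_mul_pow_div_factorial_mul_Gamma (μ y : ℝ) (n : ℕ) :
    ((n + 1 : ℕ) : ℝ) * y ^ n / (((n + 1).factorial : ℝ) * Gamma (((n + 1 : ℕ) : ℝ) + μ + 1)) =
      y ^ n / ((n.factorial : ℝ) * Gamma ((n : ℝ) + (μ + 1) + 1)) := by
  rw [Nat.factorial_succ, Nat.cast_mul, mul_assoc, mul_div_mul_left _ _ (by positivity)]
  push_cast
  ring_nf

lemma hasSum_deriv_besselIReduced (μ y : ℝ) :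
    HasSum (fun n : ℕ => (n : ℝ) * y ^ (n - 1) / ((n.factorial : ℝ) * Gamma ((n : ℝ) + μ + 1)))
      (besselIReduced (μ + 1) y) := by
  refine (hasSum_nat_add_iff' 1).mp ?_
  simp only [Finset.sum_range_one, Nat.cast_zero, zero_mul, zero_div, sub_zero, Nat.add_sub_cancel,
    succ_mul_pow_div_factorial_mul_Gamma]
  exact (summable_besselIReduced (μ + 1) y).hasSum

lemma hasDerivAt_besselIReduced (μ y : ℝ) :
    HasDerivAt (besselIReduced μ) (besselIReduced (μ + 1) y) y := by
  set R := |y| + 1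
  have hbound : ∀ (n : ℕ), ∀ z ∈ Metric.ball (0 : ℝ) R,
      ‖(n : ℝ) * z ^ (n - 1) / ((n.factorial : ℝ) * Gamma ((n : ℝ) + μ + 1))‖ ≤
        ‖(n : ℝ) * R ^ (n - 1) / ((n.factorial : ℝ) * Gamma ((n : ℝ) + μ + 1))‖ := by
    intro n z hz
    rw [mem_ball_zero_iff] at hz
    simp only [norm_div, norm_mul, norm_pow]
    gcongr
    exact hz.le.trans (le_abs_self R)
  rw [← (hasSum_deriv_besselIReduced μ y).tsum_eq]
  exact hasDerivAt_tsum_of_isPreconnected (hasSum_deriv_besselIReduced μ R).summable.norm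
    Metric.isOpen_ball (convex_ball 0 R).isPreconnected
    (fun n z _ => (hasDerivAt_pow n z).div_const _) hbound (Metric.mem_ball_self (by positivity))
    (summable_besselIReduced μ 0) (by simp [R])

lemma pow_div_factorial_mul_Gamma_eq (μ y : ℝ) (n : ℕ) :
    y ^ n / ((n.factorial : ℝ) * Gamma ((n : ℝ) + μ + 1)) =
      ((n : ℝ) + μ + 1) * (y ^ n / ((n.factorial : ℝ) * Gamma ((n : ℝ) + (μ + 1) + 1))) := by
  by_cases hs : (n : ℝ) + μ + 1 = 0
  · simp [hs]
  rw [← add_assoc, Gamma_add_one hs, mul_left_comm _ ((n : ℝ) + μ + 1), ← mul_div_assoc,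
    mul_div_mul_left _ _ hs]

lemma besselIReduced_recurrence (μ y : ℝ) :
    besselIReduced μ y = (μ + 1) * besselIReduced (μ + 1) y + y * besselIReduced (μ + 2) y := by
  have hshift : HasSum
      (fun n : ℕ => (n : ℝ) * (y ^ n / ((n.factorial : ℝ) * Gamma ((n : ℝ) + (μ + 1) + 1))))
      (y * besselIReduced (μ + 2) y) := by
    rw [show μ + 2 = μ + 1 + 1 by ring]
    refine ((hasSum_deriv_besselIReduced (μ + 1) y).mul_left y).congr_fun fun n => ?_
    rcases n with _ | n
    · simp
    · simp only [Nat.cast_add, Nat.cast_one, Nat.add_sub_cancel, pow_succ]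
      ring
  have hsum := ((summable_besselIReduced (μ + 1) y).hasSum.mul_left (μ + 1)).add hshift
  exact (tsum_congr fun n => by rw [pow_div_factorial_mul_Gamma_eq]; ring).trans hsum.tsum_eq

lemma besselIReduced_zero (μ : ℝ) : besselIReduced μ 0 = (Gamma (μ + 1))⁻¹ := by
  rw [besselIReduced, tsum_eq_single 0 fun n hn => by simp [hn]]
  simp

lemma besselIReduced_pos {μ y : ℝ} (hμ : -1 < μ) (hy : 0 ≤ y) : 0 < besselIReduced μ y := by
  have hΓ (n : ℕ) : 0 < Gamma ((n : ℝ) + μ + 1) :=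
    Gamma_pos_of_pos (by linarith [n.cast_nonneg (α := ℝ)])
  refine (summable_besselIReduced μ y).tsum_pos (fun n => ?_) 0 ?_
  · have := hΓ n
    positivity
  · simpa using hΓ 0

lemma besselI_eq_rpow_mul_besselIReduced (μ : ℝ) {x : ℝ} (hx : 0 < x) :
    besselI μ x = (x / 2) ^ μ * besselIReduced μ (x ^ 2 / 4) := by
  rw [besselI, besselIReduced, ← tsum_mul_left, show x ^ 2 / 4 = (x / 2) ^ 2 by ring]
  refine tsum_congr fun n => ?_
  rw [rpow_add (by positivity), rpow_mul (by positivity), rpow_natCast, rpow_two]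
  ring

lemma besselI_pos {μ x : ℝ} (hμ : -1 < μ) (hx : 0 < x) : 0 < besselI μ x := by
  rw [besselI_eq_rpow_mul_besselIReduced μ hx]
  exact mul_pos (rpow_pos_of_pos (by positivity) μ) (besselIReduced_pos hμ (by positivity))

lemma besselI_sub_one (μ : ℝ) {x : ℝ} (hx : 0 < x) :
    besselI (μ - 1) x = 2 * μ / x * besselI μ x + besselI (μ + 1) x := by
  simp only [besselI_eq_rpow_mul_besselIReduced _ hx]
  rw [besselIReduced_recurrence (μ - 1), sub_add_cancel, show μ - 1 + 2 = μ + 1 by ring,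
    rpow_sub_one (by positivity), rpow_add_one (by positivity)]
  field_simp
  ring

lemma hasDerivAt_besselI (μ : ℝ) {x : ℝ} (hx : 0 < x) :
    HasDerivAt (besselI μ) (μ / x * besselI μ x + besselI (μ + 1) x) x := by
  have hpow : HasDerivAt (fun t => (t / 2) ^ μ) (μ * (x / 2) ^ (μ - 1) * (1 / 2)) x :=
    (hasDerivAt_rpow_const (Or.inl (by positivity))).comp x ((hasDerivAt_id x).div_const 2)
  have hsq : HasDerivAt (fun t : ℝ => t ^ 2 / 4) (x / 2) x :=
    ((hasDerivAt_pow 2 x).div_const 4).congr_deriv (by ring)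
  have heq : besselI μ =ᶠ[𝓝 x] fun t => (t / 2) ^ μ * besselIReduced μ (t ^ 2 / 4) :=
    (eventually_gt_nhds hx).mono fun t ht => besselI_eq_rpow_mul_besselIReduced μ ht
  refine ((hpow.mul ((hasDerivAt_besselIReduced μ _).comp x hsq)).congr_of_eventuallyEq
    heq).congr_deriv ?_
  rw [Function.comp_apply, besselI_eq_rpow_mul_besselIReduced μ hx,
    besselI_eq_rpow_mul_besselIReduced _ hx, rpow_sub_one (by positivity),
    rpow_add_one (by positivity)]
  field_simp

lemma hasDerivAt_besselI_add_one (μ : ℝ) {x : ℝ} (hx : 0 < x) :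
    HasDerivAt (besselI (μ + 1)) (besselI μ x - (μ + 1) / x * besselI (μ + 1) x) x := by
  convert hasDerivAt_besselI (μ + 1) hx using 1
  rw [← add_sub_cancel_right μ 1, besselI_sub_one (μ + 1) hx, add_sub_cancel_right]
  ring

lemma tendsto_besselI_nhdsGT_zero {μ : ℝ} (hμ : 0 ≤ μ) :
    Tendsto (besselI μ) (𝓝[>] 0) (𝓝 (0 ^ μ / Gamma (μ + 1))) := by
  have hred : Continuous (besselIReduced μ) :=
    continuous_iff_continuousAt.2 fun y => (hasDerivAt_besselIReduced μ y).continuousAt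
  have hcont : Continuous fun t : ℝ => (t / 2) ^ μ * besselIReduced μ (t ^ 2 / 4) := by
    have := continuous_rpow_const hμ
    fun_prop
  have hlim := (hcont.tendsto 0).mono_left (nhdsWithin_le_nhds (s := Ioi 0))
  rw [zero_div, zero_pow two_ne_zero, zero_div, besselIReduced_zero, ← div_eq_mul_inv] at hlim
  exact hlim.congr' (eventually_nhdsWithin_of_forall fun t ht =>
    (besselI_eq_rpow_mul_besselIReduced μ ht).symm)

noncomputable def turanGap (ν t : ℝ) : ℝ :=
  t * (1 - t) * besselI ν t ^ 2 + 2 * ν * t * besselI ν t * besselI (ν + 1) t +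
    t ^ 2 * besselI (ν + 1) t ^ 2

noncomputable def turanGapDerivFactor (ν t : ℝ) : ℝ :=
  (2 * ν + 1 - 2 * t) * besselI ν t + 2 * t * besselI (ν + 1) t

lemma turanGap_eq (ν : ℝ) {t : ℝ} (ht : 0 < t) :
    turanGap ν t =
      t * (besselI ν t ^ 2 - t * (besselI ν t ^ 2 - besselI (ν - 1) t * besselI (ν + 1) t)) := by
  rw [turanGap, besselI_sub_one ν ht]
  field_simp
  ring

lemma hasDerivAt_turanGap (ν : ℝ) {t : ℝ} (ht : 0 < t) :
    HasDerivAt (turanGap ν) (besselI ν t * turanGapDerivFactor ν t) t := by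
  have ha := hasDerivAt_besselI ν ht
  have hb := hasDerivAt_besselI_add_one ν ht
  have hid := hasDerivAt_id' t
  refine ((((hid.mul (hid.const_sub 1)).mul (ha.pow 2)).add
    (((hid.const_mul (2 * ν)).mul ha).mul hb)).add ((hid.pow 2).mul (hb.pow 2))).congr_deriv ?_
  simp only [turanGapDerivFactor, Pi.mul_apply, Pi.pow_apply]
  field_simp
  ring

lemma tendsto_turanGap_nhdsGT_zero {ν : ℝ} (hν : 0 ≤ ν) :
    Tendsto (turanGap ν) (𝓝[>] 0) (𝓝 0) := by
  have ha := tendsto_besselI_nhdsGT_zero hν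
  have hb := tendsto_besselI_nhdsGT_zero (by linarith : 0 ≤ ν + 1)
  have hid : Tendsto (fun t : ℝ => t) (𝓝[>] 0) (𝓝 0) :=
    tendsto_nhdsWithin_of_tendsto_nhds tendsto_id
  unfold turanGap
  simpa using (((hid.mul (hid.const_sub 1)).mul (ha.pow 2)).add
    (((hid.const_mul (2 * ν)).mul ha).mul hb)).add ((hid.pow 2).mul (hb.pow 2))

lemma monotoneOn_exp_mul_rpow_mul_turanGapDerivFactor {ν : ℝ} (hν : 1 / 2 ≤ ν) :
    MonotoneOn (fun t => exp t * t ^ (-(1 / 2) : ℝ) * turanGapDerivFactor ν t) (Ioi 0) := by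
  have hderiv : ∀ t ∈ Ioi (0 : ℝ),
      HasDerivAt (fun t => exp t * t ^ (-(1 / 2) : ℝ) * turanGapDerivFactor ν t)
        (exp t * t ^ (-(1 / 2) : ℝ) * ((4 * ν ^ 2 - 1) / (2 * t) * besselI ν t)) t := by
    intro t (ht : 0 < t)
    have hid := hasDerivAt_id' t
    have hD := (((hid.const_mul 2).const_sub (2 * ν + 1)).mul (hasDerivAt_besselI ν ht)).add
      ((hid.const_mul 2).mul (hasDerivAt_besselI_add_one ν ht))
    refine (((hasDerivAt_exp t).mul (hasDerivAt_rpow_const (Or.inl ht.ne'))).mul hD).congr_deriv ?_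
    simp only [Pi.mul_apply, Pi.add_apply]
    rw [rpow_sub_one ht.ne']
    field_simp
    ring
  refine monotoneOn_of_hasDerivAt_nonneg (convex_Ioi 0) hderiv fun t (ht : 0 < t) => ?_
  have : 0 ≤ 4 * ν ^ 2 - 1 := by nlinarith
  have := besselI_pos (by linarith) ht (μ := ν)
  positivity

lemma turanGapDerivFactor_pos {ν t : ℝ} (hν : 1 / 2 ≤ ν) (ht : 0 < t) :
    0 < turanGapDerivFactor ν t := by
  have hsmall {s : ℝ} (hs : 0 < s) (hs' : s ≤ 1 / 2) : 0 < turanGapDerivFactor ν s := by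
    have ha := besselI_pos (by linarith) hs (μ := ν)
    have hb := besselI_pos (by linarith) hs (μ := ν + 1)
    exact add_pos_of_nonneg_of_pos (mul_nonneg (by linarith) ha.le) (by positivity)
  rcases le_or_gt t (1 / 2) with h | h
  · exact hsmall ht h
  have hhalf := hsmall (by norm_num : (0 : ℝ) < 1 / 2) le_rfl
  have hweighted : 0 < exp t * t ^ (-(1 / 2) : ℝ) * turanGapDerivFactor ν t :=
    lt_of_lt_of_le (by positivity)
      (monotoneOn_exp_mul_rpow_mul_turanGapDerivFactor hν (by norm_num : (1 / 2 : ℝ) ∈ Ioi 0) ht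
        h.le)
  exact (mul_pos_iff_of_pos_left (by positivity)).mp hweighted

lemma strictMonoOn_turanGap {ν : ℝ} (hν : 1 / 2 ≤ ν) : StrictMonoOn (turanGap ν) (Ioi 0) :=
  strictMonoOn_of_hasDerivAt_pos (convex_Ioi 0) (fun _ ht => hasDerivAt_turanGap ν ht)
    fun _ ht => mul_pos (besselI_pos (by linarith) ht) (turanGapDerivFactor_pos hν ht)

theorem turan_besselI_upper_inv_x (ν : ℝ) (hν : 1 / 2 ≤ ν) (x : ℝ) (hx : 0 < x) :
    besselI ν x ^ 2 - besselI (ν - 1) x * besselI (ν + 1) x < besselI ν x ^ 2 / x := by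
  have hgap : 0 < turanGap ν x := lt_of_strictMonoOn_of_tendsto_nhdsGT (strictMonoOn_turanGap hν)
    (tendsto_turanGap_nhdsGT_zero (by linarith)) hx
  rw [turanGap_eq ν hx] at hgap
  rw [lt_div_iff₀ hx]
  linarith [(mul_pos_iff_of_pos_left hx).mp hgap]
end

section
/- Let ν ≥ 1/2 be real. Then for all x > 0 the logarithmic derivative of the modified Bessel function of the first kind satisfies x · I_ν′(x) / I_ν(x) > √(x² + ν² − 1/4) − 1/2, where I_ν′ denotes the derivative of I_ν with respect to x. -/
open Real

/-!
Write `q = (x/2)²` and `b_n = 1 / (n! Γ(n+ν+1))`. Then `I_ν(x) = (x/2)^ν F(q)` and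
`x I_ν'(x) = (x/2)^ν G(q)` with `F = ∑ b_n qⁿ` and `G = ∑ (2n+ν) b_n qⁿ`, so the claim amounts to
`G² + GF - (x² + ν² - 1/2) F² > 0`. By Cauchy products the left side is a power series in `q` whose
coefficient `c_m` is a sum over `k + l = m` of a quadratic in `k, l` times `b_k b_l`. The recursion
`b_{l-1} = l (l+ν) b_l` shifts indices and the symmetry `k ↔ l` kills antisymmetric terms, giving
`(2m + 2ν - 1) c_m = (2ν² - 1/2) ∑_{k+l=m} b_k b_l` for `m ≥ 1`, while `c_0 = (ν + 1/2) b_0²`.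
So for `ν ≥ 1/2` every coefficient is nonnegative and the constant one is positive.
-/

open Finset

section PowerSeries

variable {a : ℕ → ℝ}

lemma summable_natCast_mul_mul_pow (ha : ∀ r, Summable fun n ↦ a n * r ^ n) (r : ℝ) :
    Summable fun n ↦ n * a n * r ^ n := by
  refine .of_norm_bounded (ha (2 * r)).norm fun n ↦ ?_
  have hn : (n : ℝ) ≤ 2 ^ n := by exact_mod_cast n.lt_two_pow_self.le
  simp only [norm_mul, norm_pow, Real.norm_natCast, Real.norm_ofNat, mul_pow]
  calc (n : ℝ) * ‖a n‖ * ‖r‖ ^ n ≤ 2 ^ n * ‖a n‖ * ‖r‖ ^ n := by gcongr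
    _ = ‖a n‖ * (2 ^ n * ‖r‖ ^ n) := by ring

lemma hasSum_sum_antidiagonal_mul_pow {c : ℕ → ℝ} {q : ℝ} (ha : Summable fun n ↦ a n * q ^ n)
    (hc : Summable fun n ↦ c n * q ^ n) :
    HasSum (fun m ↦ (∑ p ∈ antidiagonal m, a p.1 * c p.2) * q ^ m)
      ((∑' n, a n * q ^ n) * ∑' n, c n * q ^ n) := by
  have hterm (m : ℕ) : (∑ p ∈ antidiagonal m, a p.1 * c p.2) * q ^ m =
      ∑ p ∈ antidiagonal m, a p.1 * q ^ p.1 * (c p.2 * q ^ p.2) := by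
    rw [sum_mul]
    refine sum_congr rfl fun p hp ↦ ?_
    rw [← mem_antidiagonal.mp hp, pow_add]
    ring
  simp_rw [hterm]
  rw [tsum_mul_tsum_eq_tsum_sum_antidiagonal_of_summable_norm ha.norm hc.norm]
  exact (summable_norm_sum_mul_antidiagonal_of_summable_norm ha.norm hc.norm).of_norm.hasSum

lemma hasDerivAt_tsum_mul_pow (ha : ∀ r, Summable fun n ↦ a n * r ^ n) (z : ℝ) :
    HasDerivAt (fun y ↦ ∑' n, a n * y ^ n) (∑' n, n * a n * z ^ (n - 1)) z := by
  obtain ⟨R, hR, hzR⟩ : ∃ R : ℝ, 1 ≤ R ∧ |z| < R := ⟨|z| + 1, by simp, by simp⟩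
  have hz : z ∈ Set.Ioo (-R) R := abs_lt.mp hzR
  refine hasDerivAt_tsum_of_isPreconnected (g := fun n y ↦ a n * y ^ n)
    (g' := fun n y ↦ n * a n * y ^ (n - 1)) (summable_natCast_mul_mul_pow ha R).norm isOpen_Ioo
    isPreconnected_Ioo (fun n y _ ↦ ?_) (fun n y hy ↦ ?_) hz (ha z) hz
  · simpa [mul_comm, mul_assoc] using (hasDerivAt_pow n y).const_mul (a n)
  · have hy : |y| ≤ R := (abs_lt.mpr hy).le
    simp only [norm_mul, norm_pow, Real.norm_eq_abs]
    gcongr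
    calc |y| ^ (n - 1) ≤ |R| ^ (n - 1) :=
          pow_le_pow_left₀ (abs_nonneg y) (hy.trans (le_abs_self R)) _
      _ ≤ |R| ^ n := pow_le_pow_right₀ (hR.trans (le_abs_self R)) (Nat.sub_le n 1)

end PowerSeries

lemma sum_antidiagonal_mul_mul_eq_zero_of_antisymm (b : ℕ → ℝ) {h : ℕ → ℕ → ℝ}
    (hh : ∀ k l, h l k = -h k l) (n : ℕ) :
    ∑ p ∈ antidiagonal n, h p.1 p.2 * (b p.1 * b p.2) = 0 := by
  have hswap := Nat.sum_antidiagonal_swap (n := n) (f := fun p ↦ h p.1 p.2 * (b p.1 * b p.2))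
  have hneg : ∀ p ∈ antidiagonal n,
      h p.2 p.1 * (b p.2 * b p.1) = -(h p.1 p.2 * (b p.1 * b p.2)) := fun p _ ↦ by
    rw [hh]; ring
  simp only [Prod.fst_swap, Prod.snd_swap] at hswap
  rw [sum_congr rfl hneg, sum_neg_distrib] at hswap
  linarith

noncomputable def besselCoeff (ν : ℝ) (n : ℕ) : ℝ :=
  ((n.factorial : ℝ) * Real.Gamma ((n : ℝ) + ν + 1))⁻¹

section BesselCoeff

variable {ν : ℝ}

lemma besselCoeff_pos (hν : -1 < ν) (n : ℕ) : 0 < besselCoeff ν n := by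
  have := Real.Gamma_pos_of_pos (by linarith [n.cast_nonneg (α := ℝ)] : 0 < (n : ℝ) + ν + 1)
  unfold besselCoeff
  positivity

lemma besselCoeff_eq_mul_succ (hν : -1 < ν) (n : ℕ) :
    besselCoeff ν n = (n + 1) * (n + 1 + ν) * besselCoeff ν (n + 1) := by
  have hpos : 0 < (n : ℝ) + ν + 1 := by linarith [n.cast_nonneg (α := ℝ)]
  unfold besselCoeff
  rw [Nat.factorial_succ, Nat.cast_succ, (by ring : (n : ℝ) + 1 + ν + 1 = (n + ν + 1) + 1),
    Real.Gamma_add_one hpos.ne']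
  push_cast
  field_simp
  ring

lemma besselCoeff_le (hν : 0 ≤ ν) (n : ℕ) : besselCoeff ν n ≤ besselCoeff ν 0 / n.factorial := by
  induction n with
  | zero => simp
  | succ n ih =>
    have hb := besselCoeff_pos (by linarith) (n + 1) (ν := ν)
    rw [Nat.factorial_succ, Nat.cast_mul, mul_comm, ← div_div, le_div_iff₀ (by positivity)]
    calc besselCoeff ν (n + 1) * (n + 1 : ℕ) ≤ besselCoeff ν (n + 1) * ((n + 1) * (n + 1 + ν)) := by
          push_cast; gcongr; nlinarith [n.cast_nonneg (α := ℝ)]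
      _ = besselCoeff ν n := by rw [besselCoeff_eq_mul_succ (by linarith) n]; ring
      _ ≤ besselCoeff ν 0 / n.factorial := ih

lemma summable_besselCoeff_mul_pow (hν : 0 ≤ ν) (r : ℝ) :
    Summable fun n ↦ besselCoeff ν n * r ^ n := by
  refine .of_norm_bounded ((Real.summable_pow_div_factorial ‖r‖).mul_left (besselCoeff ν 0))
    fun n ↦ ?_
  rw [norm_mul, norm_pow, Real.norm_of_nonneg (besselCoeff_pos (by linarith) n).le, mul_div_assoc',
    mul_div_right_comm]
  gcongr
  exact besselCoeff_le hν n

lemma sum_antidiagonal_mul_besselCoeff_succ (hν : -1 < ν) (f : ℕ → ℕ → ℝ) (n : ℕ) :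
    ∑ p ∈ antidiagonal (n + 1),
        f p.1 p.2 * (p.2 * (p.2 + ν)) * (besselCoeff ν p.1 * besselCoeff ν p.2) =
      ∑ p ∈ antidiagonal n, f p.1 (p.2 + 1) * (besselCoeff ν p.1 * besselCoeff ν p.2) := by
  rw [Nat.sum_antidiagonal_succ']
  simp only [Nat.cast_zero, zero_mul, mul_zero, zero_add]
  refine sum_congr rfl fun p _ ↦ ?_
  rw [besselCoeff_eq_mul_succ hν p.2]
  push_cast
  ring

end BesselCoeff

noncomputable def besselSeries (ν q : ℝ) : ℝ := ∑' n, besselCoeff ν n * q ^ n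

noncomputable def besselEulerSeries (ν q : ℝ) : ℝ := ∑' n, (2 * n + ν) * besselCoeff ν n * q ^ n

section BesselSeries

variable {ν : ℝ}

lemma besselI_eq_rpow_mul_besselSeries {x : ℝ} (hx : 0 < x) :
    besselI ν x = (x / 2) ^ ν * besselSeries ν ((x / 2) ^ 2) := by
  rw [besselI, besselSeries, ← tsum_mul_left]
  refine tsum_congr fun n ↦ ?_
  rw [Real.rpow_add (by positivity), Real.rpow_mul (by positivity), Real.rpow_natCast,
    Real.rpow_two, besselCoeff, div_eq_mul_inv]
  ring

lemma hasDerivAt_besselSeries (hν : 0 ≤ ν) (q : ℝ) :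
    HasDerivAt (besselSeries ν) (∑' n, n * besselCoeff ν n * q ^ (n - 1)) q :=
  hasDerivAt_tsum_mul_pow (summable_besselCoeff_mul_pow hν) q

lemma besselEulerSeries_eq (hν : 0 ≤ ν) (q : ℝ) :
    besselEulerSeries ν q =
      ν * besselSeries ν q + 2 * q * ∑' n, n * besselCoeff ν n * q ^ (n - 1) := by
  have hsum := summable_besselCoeff_mul_pow hν
  have hshift :
      q * ∑' n, n * besselCoeff ν n * q ^ (n - 1) = ∑' n, n * besselCoeff ν n * q ^ n := by
    rw [← tsum_mul_left]
    refine tsum_congr fun n ↦ ?_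
    rcases n.eq_zero_or_pos with rfl | hn
    · simp
    · rw [← mul_pow_sub_one hn.ne' q]
      ring
  rw [mul_assoc, hshift, besselSeries, ← tsum_mul_left, ← tsum_mul_left,
    ← (hsum q).mul_left ν |>.tsum_add ((summable_natCast_mul_mul_pow hsum q).mul_left 2),
    besselEulerSeries]
  exact tsum_congr fun n ↦ by ring

lemma mul_deriv_besselI (hν : 0 ≤ ν) {x : ℝ} (hx : 0 < x) :
    x * deriv (besselI ν) x = (x / 2) ^ ν * besselEulerSeries ν ((x / 2) ^ 2) := by
  have hhalf : HasDerivAt (fun y : ℝ ↦ y / 2) (1 / 2) x := (hasDerivAt_id x).div_const 2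
  have hpow :=
    (Real.hasDerivAt_rpow_const (p := ν) (Or.inl (by positivity : x / 2 ≠ 0))).comp x hhalf
  have hser := (hasDerivAt_besselSeries hν ((x / 2) ^ 2)).comp x (hhalf.pow 2)
  have heq : besselI ν =ᶠ[nhds x] fun y ↦ (y / 2) ^ ν * besselSeries ν ((y / 2) ^ 2) := by
    filter_upwards [lt_mem_nhds hx] with y hy using besselI_eq_rpow_mul_besselSeries hy
  have hderiv : HasDerivAt (fun y ↦ (y / 2) ^ ν * besselSeries ν ((y / 2) ^ 2)) _ x :=
    hpow.mul hser
  rw [heq.deriv_eq, hderiv.deriv, besselEulerSeries_eq hν, Real.rpow_sub_one (by positivity),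
    Function.comp_apply]
  field_simp
  ring

lemma besselSeries_pos (hν : 0 ≤ ν) {q : ℝ} (hq : 0 ≤ q) : 0 < besselSeries ν q :=
  (summable_besselCoeff_mul_pow hν q).tsum_pos
    (fun n ↦ mul_nonneg (besselCoeff_pos (by linarith) n).le (pow_nonneg hq n)) 0
    (by simpa using besselCoeff_pos (by linarith) 0)

lemma besselEulerSeries_nonneg (hν : 0 ≤ ν) {q : ℝ} (hq : 0 ≤ q) : 0 ≤ besselEulerSeries ν q :=
  tsum_nonneg fun n ↦ by have := besselCoeff_pos (by linarith) n (ν := ν); positivity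

end BesselSeries

noncomputable def besselGapCoeff (ν : ℝ) (m : ℕ) : ℝ :=
  ∑ p ∈ antidiagonal m, ((2 * p.1 + ν) * (2 * p.2 + ν) + (2 * p.1 + ν) - (ν ^ 2 - 1 / 2)
    - 4 * p.2 * (p.2 + ν)) * (besselCoeff ν p.1 * besselCoeff ν p.2)

section BesselGap

variable {ν : ℝ}

lemma besselGapCoeff_zero : besselGapCoeff ν 0 = (ν + 1 / 2) * besselCoeff ν 0 ^ 2 := by
  simp [besselGapCoeff]
  ring

lemma mul_besselGapCoeff_succ (hν : -1 < ν) (m : ℕ) :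
    (2 * (m + 1) + 2 * ν - 1) * besselGapCoeff ν (m + 1) =
      (2 * ν ^ 2 - 1 / 2) * ∑ p ∈ antidiagonal (m + 1), besselCoeff ν p.1 * besselCoeff ν p.2 := by
  -- On `k + l = m + 1` the scaled summand is `(2ν² - 1/2) + 8 (k - l + 1) l (l + ν) + A k l` with
  -- `A` antisymmetric, and the middle term shifts to `8 (k - l)` on `k + l = m`.
  set K : ℝ := (2 * (m + 1) + 2 * ν - 1) * (2 * (m + 1) + 2 * ν + 1)
  set A : ℕ → ℕ → ℝ := fun k l ↦
    -4 * (k - l + 1) * (l * (l + ν)) - 4 * (k - l - 1) * (k * (k + ν)) + K * (k - l)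
  have hA : ∀ k l, A l k = -A k l := fun k l ↦ by simp only [A]; ring
  have hterm : ∀ p ∈ antidiagonal (m + 1),
      (2 * (m + 1) + 2 * ν - 1) * (((2 * p.1 + ν) * (2 * p.2 + ν) + (2 * p.1 + ν) - (ν ^ 2 - 1 / 2)
        - 4 * p.2 * (p.2 + ν)) * (besselCoeff ν p.1 * besselCoeff ν p.2)) =
      (2 * ν ^ 2 - 1 / 2) * (besselCoeff ν p.1 * besselCoeff ν p.2)
        + 8 * ((p.1 - p.2 + 1 : ℝ) * (p.2 * (p.2 + ν)) * (besselCoeff ν p.1 * besselCoeff ν p.2))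
        + A p.1 p.2 * (besselCoeff ν p.1 * besselCoeff ν p.2) := by
    intro p hp
    have hm : (m : ℝ) + 1 = p.1 + p.2 := by exact_mod_cast (mem_antidiagonal.mp hp).symm
    simp only [A, K, hm]
    ring
  have hshift := sum_antidiagonal_mul_besselCoeff_succ hν (fun k l ↦ (k - l + 1 : ℝ)) m
  simp only [Nat.cast_succ, sub_add_eq_sub_sub, sub_add_cancel] at hshift
  rw [besselGapCoeff, mul_sum, sum_congr rfl hterm, sum_add_distrib, sum_add_distrib, ← mul_sum,
    ← mul_sum, hshift, sum_antidiagonal_mul_mul_eq_zero_of_antisymm _ hA,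
    sum_antidiagonal_mul_mul_eq_zero_of_antisymm _ (h := fun k l ↦ (k - l : ℝ)) (fun _ _ ↦ by ring)]
  ring

lemma besselGapCoeff_nonneg (hν : 1 / 2 ≤ ν) (m : ℕ) : 0 ≤ besselGapCoeff ν m := by
  have hb := besselCoeff_pos (by linarith : -1 < ν)
  cases m with
  | zero => rw [besselGapCoeff_zero]; have := hb 0; positivity
  | succ m =>
    have hsum : 0 ≤ ∑ p ∈ antidiagonal (m + 1), besselCoeff ν p.1 * besselCoeff ν p.2 :=
      sum_nonneg fun p _ ↦ (mul_pos (hb p.1) (hb p.2)).le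
    have hid := mul_besselGapCoeff_succ (by linarith : -1 < ν) m
    refine nonneg_of_mul_nonneg_right (a := 2 * (m + 1) + 2 * ν - 1) ?_
      (by linarith [m.cast_nonneg (α := ℝ)])
    rw [hid]
    exact mul_nonneg (by nlinarith) hsum

lemma hasSum_besselGapCoeff_mul_pow (hν : 0 ≤ ν) (q : ℝ) :
    HasSum (fun m ↦ besselGapCoeff ν m * q ^ m)
      (besselEulerSeries ν q ^ 2 + besselEulerSeries ν q * besselSeries ν q
        - (4 * q + ν ^ 2 - 1 / 2) * besselSeries ν q ^ 2) := by
  have hb := summable_besselCoeff_mul_pow hν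
  have hG : Summable fun n ↦ (2 * n + ν) * besselCoeff ν n * q ^ n :=
    (((summable_natCast_mul_mul_pow hb q).mul_left 2).add ((hb q).mul_left ν)).congr
      fun n ↦ by ring
  have hFF := hasSum_sum_antidiagonal_mul_pow (hb q) (hb q)
  have hGG := hasSum_sum_antidiagonal_mul_pow hG hG
  have hGF := hasSum_sum_antidiagonal_mul_pow hG (hb q)
  have h4qFF : HasSum (fun m ↦ (∑ p ∈ antidiagonal m,
      4 * (p.2 * (p.2 + ν)) * (besselCoeff ν p.1 * besselCoeff ν p.2)) * q ^ m)
      (4 * q * ((∑' n, besselCoeff ν n * q ^ n) * ∑' n, besselCoeff ν n * q ^ n)) := by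
    rw [← hasSum_nat_add_iff' 1]
    simp only [sum_range_one, Nat.antidiagonal_zero, sum_singleton, CharP.cast_eq_zero, zero_mul,
      mul_zero, sub_zero]
    refine (hFF.mul_left (4 * q)).congr_fun fun m ↦ ?_
    rw [sum_antidiagonal_mul_besselCoeff_succ (by linarith) (fun _ _ ↦ 4), ← mul_sum, pow_succ]
    ring
  have hval : besselEulerSeries ν q ^ 2 + besselEulerSeries ν q * besselSeries ν q
      - (4 * q + ν ^ 2 - 1 / 2) * besselSeries ν q ^ 2 =
      (∑' n, (2 * n + ν) * besselCoeff ν n * q ^ n) * (∑' n, (2 * n + ν) * besselCoeff ν n * q ^ n)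
        + (∑' n, (2 * n + ν) * besselCoeff ν n * q ^ n) * (∑' n, besselCoeff ν n * q ^ n)
        - (ν ^ 2 - 1 / 2) * ((∑' n, besselCoeff ν n * q ^ n) * ∑' n, besselCoeff ν n * q ^ n)
        - 4 * q * ((∑' n, besselCoeff ν n * q ^ n) * ∑' n, besselCoeff ν n * q ^ n) := by
    unfold besselSeries besselEulerSeries
    ring
  rw [hval]
  refine (((hGG.add hGF).sub (hFF.mul_left (ν ^ 2 - 1 / 2))).sub h4qFF).congr_fun fun m ↦ ?_
  simp only [besselGapCoeff, sum_mul, mul_sum, ← sum_add_distrib, ← sum_sub_distrib]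
  exact sum_congr rfl fun p _ ↦ by ring

lemma mul_besselSeries_sq_lt (hν : 1 / 2 ≤ ν) {q : ℝ} (hq : 0 ≤ q) :
    (4 * q + ν ^ 2 - 1 / 2) * besselSeries ν q ^ 2 <
      besselEulerSeries ν q ^ 2 + besselEulerSeries ν q * besselSeries ν q := by
  have hsum := hasSum_besselGapCoeff_mul_pow (ν := ν) (by linarith) q
  have hb0 := besselCoeff_pos (ν := ν) (by linarith) 0
  have hpos : 0 < ∑' m, besselGapCoeff ν m * q ^ m :=
    hsum.summable.tsum_pos (fun m ↦ mul_nonneg (besselGapCoeff_nonneg hν m) (pow_nonneg hq m)) 0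
      (by rw [pow_zero, mul_one, besselGapCoeff_zero]; positivity)
  linarith [hsum.tsum_eq]

end BesselGap

theorem besselI_logDeriv_lower (ν : ℝ) (hν : 1 / 2 ≤ ν) (x : ℝ) (hx : 0 < x) :
    x * deriv (besselI ν) x / besselI ν x > Real.sqrt (x ^ 2 + ν ^ 2 - 1 / 4) - 1 / 2 := by
  have hν0 : 0 ≤ ν := by linarith
  have hq : 0 ≤ (x / 2) ^ 2 := by positivity
  set F := besselSeries ν ((x / 2) ^ 2)
  set G := besselEulerSeries ν ((x / 2) ^ 2)
  have hF : 0 < F := besselSeries_pos hν0 hq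
  have hG : 0 ≤ G := besselEulerSeries_nonneg hν0 hq
  have hkey : (x ^ 2 + ν ^ 2 - 1 / 2) * F ^ 2 < G ^ 2 + G * F := by
    have := mul_besselSeries_sq_lt hν hq
    rwa [(by ring : 4 * (x / 2) ^ 2 = x ^ 2)] at this
  rw [mul_deriv_besselI hν0 hx, besselI_eq_rpow_mul_besselSeries hx,
    mul_div_mul_left _ _ (Real.rpow_pos_of_pos (by positivity) ν).ne', gt_iff_lt,
    sub_lt_iff_lt_add, Real.sqrt_lt' (by positivity), div_add' _ _ _ hF.ne', div_pow,
    lt_div_iff₀ (by positivity)]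
  nlinarith
end

section
/- Let ν ≥ 1/2 be real and let x > 0 satisfy x² ≤ 2ν³(ν + √(ν² + 1)). Then x · I_ν′(x)/I_ν(x) > √(x² + ν²) − (x² + 2ν²)/(2(x² + ν²)), where I_ν′ denotes the derivative of I_ν with respect to x. -/
/-!
`U = x I_ν' / I_ν` is the ratio `∑ (2n+ν) tₙ / ∑ tₙ` of the series terms `tₙ`, and the recursion
`4 (n+1)(n+1+ν) tₙ₊₁ = x² tₙ` turns this into the Riccati equation `x U' = x² + ν² - U²`, with
`U > ν`. The right-hand side `g` of the bound satisfies `g(0) = ν - 1 < ν`, and, under the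
assumption on `x`, it is a strict subsolution `x g' < x² + ν² - g²` wherever `g > ν`. Hence `g`
can never catch up with `U`: at a first contact point `g = U > ν` we would get `g' < U'`.
-/

open Real

open Set

theorem Real.Gamma_le_Gamma_nat_add {s : ℝ} (hs : 1 ≤ s) (n : ℕ) :
    Gamma s ≤ Gamma (n + s) := by
  induction n with
  | zero => simp
  | succ n ih =>
    have hsn : 1 ≤ n + s := by linarith [n.cast_nonneg (α := ℝ)]
    rw [Nat.cast_succ, add_right_comm, Gamma_add_one (by linarith)]
    nlinarith [Gamma_pos_of_pos (by linarith : 0 < n + s)]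

noncomputable def besselITerm (ν : ℝ) (n : ℕ) (x : ℝ) : ℝ :=
  (x / 2) ^ (2 * (n : ℝ) + ν) / ((n.factorial : ℝ) * Gamma ((n : ℝ) + ν + 1))

/-- `x ∂ₓ` multiplies the `n`-th term by `2n + ν`, hence maps the `k`-th moment to the
`(k+1)`-st. -/
noncomputable def besselIMoment (ν : ℝ) (k : ℕ) (x : ℝ) : ℝ :=
  ∑' n : ℕ, (2 * (n : ℝ) + ν) ^ k * besselITerm ν n x

section Series

variable {ν x : ℝ}

theorem besselI_eq_besselIMoment_zero (ν : ℝ) : besselI ν = besselIMoment ν 0 := by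
  ext x
  simp [besselI, besselIMoment, besselITerm]

theorem besselITerm_pos (hν : -1 < ν) (hx : 0 < x) (n : ℕ) : 0 < besselITerm ν n x := by
  have hΓ := Gamma_pos_of_pos (by linarith [n.cast_nonneg (α := ℝ)] : 0 < (n : ℝ) + ν + 1)
  unfold besselITerm
  positivity

theorem besselITerm_mono (hν : 0 ≤ ν) (n : ℕ) {y : ℝ} (hx : 0 ≤ x) (hxy : x ≤ y) :
    besselITerm ν n x ≤ besselITerm ν n y := by
  unfold besselITerm
  gcongr

theorem besselITerm_succ (hν : -1 < ν) (hx : 0 < x) (n : ℕ) :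
    4 * ((n : ℝ) + 1) * ((n : ℝ) + 1 + ν) * besselITerm ν (n + 1) x =
      x ^ 2 * besselITerm ν n x := by
  have hs : 0 < (n : ℝ) + ν + 1 := by linarith [n.cast_nonneg (α := ℝ)]
  have hpow :
      (x / 2) ^ (2 * ((n + 1 : ℕ) : ℝ) + ν) = (x / 2) ^ (2 * (n : ℝ) + ν) * (x / 2) ^ 2 := by
    rw [← rpow_natCast (x / 2) 2, ← rpow_add (by positivity)]
    push_cast; ring_nf
  unfold besselITerm
  rw [hpow, Nat.factorial_succ,
    show ((n + 1 : ℕ) : ℝ) + ν + 1 = (n + ν + 1) + 1 by push_cast; ring, Gamma_add_one hs.ne']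
  push_cast
  field_simp
  ring

theorem besselITerm_le (hν : 0 ≤ ν) (hx : 0 < x) (n : ℕ) :
    besselITerm ν n x ≤ (x / 2) ^ ν / Gamma (ν + 1) * (((x / 2) ^ 2) ^ n / n.factorial) := by
  have hΓ : Gamma (ν + 1) ≤ Gamma (n + ν + 1) := by
    rw [add_assoc]; exact Real.Gamma_le_Gamma_nat_add (by linarith) n
  have hΓpos := Gamma_pos_of_pos (by linarith : 0 < ν + 1)
  have hpow : (x / 2) ^ (2 * (n : ℝ) + ν) = ((x / 2) ^ 2) ^ n * (x / 2) ^ ν := by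
    rw [rpow_add (by positivity), ← pow_mul, ← rpow_natCast]
    push_cast; ring_nf
  rw [besselITerm, hpow, div_mul_div_comm, mul_comm ((x / 2) ^ ν), mul_comm (Gamma _)]
  gcongr

theorem two_mul_add_pow_le (hν : 0 ≤ ν) (n k : ℕ) :
    (2 * (n : ℝ) + ν) ^ k ≤ (2 + ν) ^ k * ((2 : ℝ) ^ k) ^ n := by
  have hn : (n : ℝ) < 2 ^ n := by exact_mod_cast n.lt_two_pow_self
  have h1 : (1 : ℝ) ≤ 2 ^ n := one_le_pow₀ (by norm_num)
  rw [← pow_mul, mul_comm k, pow_mul, ← mul_pow]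
  gcongr
  nlinarith

theorem summable_besselIMoment (hν : 0 ≤ ν) (hx : 0 < x) (k : ℕ) :
    Summable fun n : ℕ => (2 * (n : ℝ) + ν) ^ k * besselITerm ν n x := by
  refine Summable.of_nonneg_of_le
    (fun n => mul_nonneg (by positivity) (besselITerm_pos (by linarith) hx n).le)
    (fun n => mul_le_mul (two_mul_add_pow_le hν n k) (besselITerm_le hν hx n)
      (besselITerm_pos (by linarith) hx n).le (by positivity))
    (((summable_pow_div_factorial (2 ^ k * (x / 2) ^ 2)).mul_left
      ((2 + ν) ^ k * ((x / 2) ^ ν / Gamma (ν + 1)))).congr fun n => by rw [mul_pow]; ring)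

theorem hasDerivAt_besselITerm (n : ℕ) (hx : 0 < x) :
    HasDerivAt (besselITerm ν n) ((2 * n + ν) * besselITerm ν n x / x) x := by
  have hpow : HasDerivAt (fun z : ℝ => (z / 2) ^ (2 * (n : ℝ) + ν))
      ((2 * n + ν) * (x / 2) ^ (2 * (n : ℝ) + ν - 1) * (1 / 2)) x :=
    (hasDerivAt_rpow_const (Or.inl (by positivity))).comp x ((hasDerivAt_id x).div_const 2)
  refine (hpow.div_const ((n.factorial : ℝ) * Gamma ((n : ℝ) + ν + 1))).congr_deriv ?_
  rw [besselITerm, rpow_sub (by positivity), rpow_one]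
  field_simp

theorem hasDerivAt_besselIMoment (hν : 0 ≤ ν) (hx : 0 < x) (k : ℕ) :
    HasDerivAt (besselIMoment ν k) (besselIMoment ν (k + 1) x / x) x := by
  have hmem : x ∈ Ioo (x / 2) (2 * x) := ⟨by linarith, by linarith⟩
  have hderiv : ∀ (n : ℕ), ∀ y ∈ Ioo (x / 2) (2 * x),
      HasDerivAt (fun z => (2 * (n : ℝ) + ν) ^ k * besselITerm ν n z)
        ((2 * (n : ℝ) + ν) ^ (k + 1) * besselITerm ν n y / y) y := fun n y hy => by
    refine ((hasDerivAt_besselITerm n (by linarith [hy.1] : 0 < y)).const_mul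
      ((2 * (n : ℝ) + ν) ^ k)).congr_deriv (by ring)
  have hbound : ∀ (n : ℕ), ∀ y ∈ Ioo (x / 2) (2 * x),
      ‖(2 * (n : ℝ) + ν) ^ (k + 1) * besselITerm ν n y / y‖ ≤
        (2 * (n : ℝ) + ν) ^ (k + 1) * besselITerm ν n (2 * x) / (x / 2) := fun n y hy => by
    have hy0 : 0 < y := by linarith [hy.1]
    have hterm := besselITerm_pos (by linarith : -1 < ν) hy0 n
    rw [Real.norm_of_nonneg (by positivity)]
    have hterm2x := besselITerm_pos (by linarith : -1 < ν) (by linarith : 0 < 2 * x) n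
    exact div_le_div₀ (by positivity) (by gcongr; exact besselITerm_mono hν n hy0.le hy.2.le)
      (by positivity) hy.1.le
  have := hasDerivAt_tsum_of_isPreconnected
    ((summable_besselIMoment hν (by linarith) (k + 1)).div_const (x / 2))
    isOpen_Ioo isPreconnected_Ioo hderiv hbound hmem (summable_besselIMoment hν hx k) hmem
  rwa [tsum_div_const] at this

theorem besselIMoment_zero_eq (ν : ℝ) (x : ℝ) : besselIMoment ν 0 x = ∑' n, besselITerm ν n x := by
  simp [besselIMoment]

theorem summable_besselITerm (hν : 0 ≤ ν) (hx : 0 < x) : Summable fun n => besselITerm ν n x := by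
  simpa using summable_besselIMoment hν hx 0

theorem besselIMoment_zero_pos (hν : 0 ≤ ν) (hx : 0 < x) : 0 < besselIMoment ν 0 x := by
  rw [besselIMoment_zero_eq]
  exact (summable_besselITerm hν hx).tsum_pos (fun n => (besselITerm_pos (by linarith) hx n).le) 0
    (besselITerm_pos (by linarith) hx 0)

theorem mul_besselIMoment_zero_lt_besselIMoment_one (hν : 0 ≤ ν) (hx : 0 < x) :
    ν * besselIMoment ν 0 x < besselIMoment ν 1 x := by
  have hpos := besselITerm_pos (by linarith : -1 < ν) hx
  have hsum : Summable fun n : ℕ => 2 * (n : ℝ) * besselITerm ν n x := by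
    refine ((summable_besselIMoment hν hx 1).sub ((summable_besselITerm hν hx).mul_left ν)).congr
      fun n => ?_
    ring
  have hsplit : besselIMoment ν 1 x =
      ∑' n : ℕ, 2 * (n : ℝ) * besselITerm ν n x + ν * besselIMoment ν 0 x := by
    rw [besselIMoment_zero_eq, ← tsum_mul_left,
      ← hsum.tsum_add ((summable_besselITerm hν hx).mul_left ν)]
    exact tsum_congr fun n => by ring
  have hlower : 0 < ∑' n : ℕ, 2 * (n : ℝ) * besselITerm ν n x :=
    hsum.tsum_pos (fun n => mul_nonneg (by positivity) (hpos n).le) 1 (by simpa using hpos 1)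
  linarith

theorem besselIMoment_two (hν : 0 ≤ ν) (hx : 0 < x) :
    besselIMoment ν 2 x = (x ^ 2 + ν ^ 2) * besselIMoment ν 0 x := by
  have hsum : Summable fun n : ℕ => 4 * (n : ℝ) * (n + ν) * besselITerm ν n x := by
    refine ((summable_besselIMoment hν hx 2).sub
      ((summable_besselITerm hν hx).mul_left (ν ^ 2))).congr fun n => ?_
    ring
  have hshift :
      ∑' n : ℕ, 4 * (n : ℝ) * (n + ν) * besselITerm ν n x = x ^ 2 * besselIMoment ν 0 x := by
    rw [hsum.tsum_eq_zero_add, besselIMoment_zero_eq, ← tsum_mul_left]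
    simp only [CharP.cast_eq_zero, mul_zero, zero_mul, zero_add, Nat.cast_succ]
    exact tsum_congr fun n => by rw [← besselITerm_succ (by linarith) hx n]
  have hsplit : besselIMoment ν 2 x =
      ∑' n : ℕ, 4 * (n : ℝ) * (n + ν) * besselITerm ν n x + ν ^ 2 * besselIMoment ν 0 x := by
    rw [besselIMoment_zero_eq, ← tsum_mul_left,
      ← hsum.tsum_add ((summable_besselITerm hν hx).mul_left (ν ^ 2))]
    exact tsum_congr fun n => by ring
  rw [hsplit, hshift]
  ring

end Series

noncomputable def besselIRatio (ν x : ℝ) : ℝ := besselIMoment ν 1 x / besselIMoment ν 0 x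

section Riccati
variable {ν x : ℝ}

theorem mul_deriv_besselI_div_besselI (hν : 0 ≤ ν) (hx : 0 < x) :
    x * deriv (besselI ν) x / besselI ν x = besselIRatio ν x := by
  have := besselIMoment_zero_pos hν hx
  rw [besselI_eq_besselIMoment_zero, (hasDerivAt_besselIMoment hν hx 0).deriv, besselIRatio]
  field_simp

theorem lt_besselIRatio (hν : 0 ≤ ν) (hx : 0 < x) : ν < besselIRatio ν x :=
  (lt_div_iff₀ (besselIMoment_zero_pos hν hx)).2 (mul_besselIMoment_zero_lt_besselIMoment_one hν hx)

theorem hasDerivAt_besselIRatio (hν : 0 ≤ ν) (hx : 0 < x) :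
    HasDerivAt (besselIRatio ν) ((x ^ 2 + ν ^ 2 - besselIRatio ν x ^ 2) / x) x := by
  have h0 := besselIMoment_zero_pos hν hx
  refine ((hasDerivAt_besselIMoment hν hx 1).div (hasDerivAt_besselIMoment hν hx 0)
    h0.ne').congr_deriv ?_
  rw [besselIMoment_two hν hx, besselIRatio]
  field_simp

end Riccati

noncomputable def riccatiSubsolution (ν x : ℝ) : ℝ :=
  √(x ^ 2 + ν ^ 2) - (x ^ 2 + 2 * ν ^ 2) / (2 * (x ^ 2 + ν ^ 2))

section Subsolution
variable {ν x : ℝ}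

theorem riccatiSubsolution_zero (hν : 0 < ν) : riccatiSubsolution ν 0 = ν - 1 := by
  have : ν ^ 2 ≠ 0 := by positivity
  simp [riccatiSubsolution, sqrt_sq hν.le, this]

theorem hasDerivAt_riccatiSubsolution (hν : ν ≠ 0) (x : ℝ) :
    HasDerivAt (riccatiSubsolution ν)
      (x / √(x ^ 2 + ν ^ 2) + x * ν ^ 2 / (x ^ 2 + ν ^ 2) ^ 2) x := by
  have hs : 0 < x ^ 2 + ν ^ 2 := by positivity
  have hsq : HasDerivAt (fun z : ℝ => z ^ 2 + ν ^ 2) (2 * x) x := by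
    simpa using (hasDerivAt_pow 2 x).add_const (ν ^ 2)
  have hnum : HasDerivAt (fun z : ℝ => z ^ 2 + 2 * ν ^ 2) (2 * x) x := by
    simpa using (hasDerivAt_pow 2 x).add_const (2 * ν ^ 2)
  refine (((hasDerivAt_sqrt hs.ne').comp x hsq).sub
    (hnum.div (hsq.const_mul 2) (by positivity))).congr_deriv ?_
  have := sqrt_pos.2 hs
  field_simp
  ring

/-- Either `r ≥ 7/6`, or `r < 7/6` and `hg` forces `6 r³ - 7 r² + 3 ν² > 0`; together with
`r⁴ ≤ 2 ν² r³ + ν² r²` (from `hr`) this gives the claim. -/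
theorem riccatiSubsolution_quartic_lt {ν r : ℝ} (hν : 1 / 2 ≤ ν) (hνr : ν < r)
    (hr : r ^ 2 - 2 * ν ^ 2 * r ≤ ν ^ 2) (hg : r ^ 2 + ν ^ 2 < 2 * r ^ 2 * (r - ν)) :
    r ^ 4 + 6 * r ^ 2 * ν ^ 2 - 3 * ν ^ 4 < 8 * ν ^ 2 * r ^ 3 := by
  have hr4 : r ^ 4 ≤ 2 * ν ^ 2 * r ^ 3 + ν ^ 2 * r ^ 2 := by nlinarith [sq_nonneg r]
  have hcubic : 0 < 6 * r ^ 3 - 7 * r ^ 2 + 3 * ν ^ 2 := by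
    rcases le_or_gt (7 / 6) r with h | h
    · nlinarith [sq_nonneg r]
    · nlinarith [sq_nonneg r]
  nlinarith [sq_nonneg ν]

theorem riccatiSubsolution_ineq_of_radius {ν r : ℝ} (hν : 1 / 2 ≤ ν) (hνr : ν < r)
    (hr : r ^ 2 - 2 * ν ^ 2 * r ≤ ν ^ 2) (hg : r ^ 2 + ν ^ 2 < 2 * r ^ 2 * (r - ν)) :
    (r ^ 2 - ν ^ 2) * (1 / r + ν ^ 2 / r ^ 4) <
      r ^ 2 - (r - (r ^ 2 + ν ^ 2) / (2 * r ^ 2)) ^ 2 := by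
  have hr0 : 0 < r := by linarith
  have hdiff : r ^ 2 - (r - (r ^ 2 + ν ^ 2) / (2 * r ^ 2)) ^ 2 -
      (r ^ 2 - ν ^ 2) * (1 / r + ν ^ 2 / r ^ 4) =
        (8 * ν ^ 2 * r ^ 3 - (r ^ 4 + 6 * r ^ 2 * ν ^ 2 - 3 * ν ^ 4)) / (4 * r ^ 4) := by
    field_simp
    ring
  have := riccatiSubsolution_quartic_lt hν hνr hr hg
  have : 0 < (8 * ν ^ 2 * r ^ 3 - (r ^ 4 + 6 * r ^ 2 * ν ^ 2 - 3 * ν ^ 4)) / (4 * r ^ 4) :=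
    div_pos (by linarith) (by positivity)
  linarith

/-- The bound on `x` says exactly that `r = √(x² + ν²)` lies below `ν (ν + √(ν² + 1))`, the positive
root of `r² - 2ν² r - ν²`. -/
theorem riccatiSubsolution_deriv_lt (hν : 1 / 2 ≤ ν) (hx : 0 < x)
    (hbound : x ^ 2 ≤ 2 * ν ^ 3 * (ν + √(ν ^ 2 + 1))) (hg : ν < riccatiSubsolution ν x) :
    x / √(x ^ 2 + ν ^ 2) + x * ν ^ 2 / (x ^ 2 + ν ^ 2) ^ 2 <
      (x ^ 2 + ν ^ 2 - riccatiSubsolution ν x ^ 2) / x := by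
  have hν0 : 0 < ν := by linarith
  set r := √(x ^ 2 + ν ^ 2) with hr_def
  have hr2 : r ^ 2 = x ^ 2 + ν ^ 2 := sq_sqrt (by positivity)
  have hr0 : 0 < r := sqrt_pos.2 (by positivity)
  have hνr : ν < r := by nlinarith
  have hg_eq : riccatiSubsolution ν x = r - (r ^ 2 + ν ^ 2) / (2 * r ^ 2) := by
    rw [riccatiSubsolution, ← hr_def, hr2]
    ring_nf
  set E := √(ν ^ 2 + 1) with hE_def
  have hE2 : E ^ 2 = ν ^ 2 + 1 := sq_sqrt (by positivity)
  have hνE : ν < E := by nlinarith [sqrt_nonneg (ν ^ 2 + 1)]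
  have hr_le : r ≤ ν * (ν + E) :=
    pow_le_pow_iff_left₀ hr0.le (by positivity) two_ne_zero |>.1 (by nlinarith)
  have hr : r ^ 2 - 2 * ν ^ 2 * r ≤ ν ^ 2 := by
    nlinarith [mul_nonneg (sub_nonneg.2 hr_le) (by nlinarith : 0 ≤ r - ν * (ν - E))]
  have hg' : r ^ 2 + ν ^ 2 < 2 * r ^ 2 * (r - ν) := by
    have : (r ^ 2 + ν ^ 2) / (2 * r ^ 2) < r - ν := by linarith
    rwa [div_lt_iff₀ (by positivity), mul_comm] at this
  have key := riccatiSubsolution_ineq_of_radius hν hνr hr hg'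
  rw [lt_div_iff₀ hx, hg_eq, ← hr2]
  calc (x / r + x * ν ^ 2 / (r ^ 2) ^ 2) * x = x ^ 2 * (1 / r + ν ^ 2 / r ^ 4) := by ring
    _ = (r ^ 2 - ν ^ 2) * (1 / r + ν ^ 2 / r ^ 4) := by rw [hr2, add_sub_cancel_right]
    _ < _ := key

end Subsolution

theorem image_lt_of_deriv_lt_deriv_boundary {f f' B B' : ℝ → ℝ} {a b : ℝ}
    (hf : ∀ x ∈ Icc a b, HasDerivAt f (f' x) x) (hB : ∀ x ∈ Icc a b, HasDerivAt B (B' x) x)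
    (ha : f a < B a) (bound : ∀ x ∈ Icc a b, f x = B x → f' x < B' x) :
    ∀ ⦃x⦄, x ∈ Icc a b → f x < B x := by
  have hle := image_le_of_deriv_right_lt_deriv_boundary'
    (fun x hx => (hf x hx).continuousAt.continuousWithinAt)
    (fun x hx => (hf x (Ico_subset_Icc_self hx)).hasDerivWithinAt) ha.le
    (fun x hx => (hB x hx).continuousAt.continuousWithinAt)
    (fun x hx => (hB x (Ico_subset_Icc_self hx)).hasDerivWithinAt)
    (fun x hx => bound x (Ico_subset_Icc_self hx))
  intro x hx
  refine (hle hx).lt_of_ne fun heq => ?_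
  have hax : a < x := hx.1.lt_of_ne (by rintro rfl; exact ha.ne heq)
  -- `B - f ≥ 0` vanishes at `x`, so its slopes from the left at `x` are `≤ 0`
  have hslope := (hasDerivAt_iff_tendsto_slope_left_right.1 ((hB x hx).sub (hf x hx))).1
  have hderiv : B' x - f' x ≤ 0 := by
    refine le_of_tendsto hslope ?_
    filter_upwards [Ioo_mem_nhdsLT hax] with y hy
    have := hle ⟨hy.1.le, hy.2.le.trans hx.2⟩
    rw [slope_def_field]
    exact div_nonpos_of_nonneg_of_nonpos (by simp only [Pi.sub_apply]; linarith)
      (by linarith [hy.2])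
  linarith [bound x hx heq]

theorem besselI_logDeriv_gronwall_bound (ν : ℝ) (hν : 1 / 2 ≤ ν) (x : ℝ) (hx : 0 < x)
    (hx2 : x ^ 2 ≤ 2 * ν ^ 3 * (ν + Real.sqrt (ν ^ 2 + 1))) :
    x * deriv (besselI ν) x / besselI ν x >
      Real.sqrt (x ^ 2 + ν ^ 2) - (x ^ 2 + 2 * ν ^ 2) / (2 * (x ^ 2 + ν ^ 2)) := by
  have hν0 : 0 < ν := by linarith
  rw [mul_deriv_besselI_div_besselI hν0.le hx, gt_iff_lt]
  change riccatiSubsolution ν x < besselIRatio ν x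
  obtain ⟨δ, hgδ, hδ, hδx⟩ : ∃ δ, riccatiSubsolution ν δ < ν ∧ δ ∈ Ioc 0 x := by
    have hlt : riccatiSubsolution ν 0 < ν := by rw [riccatiSubsolution_zero hν0]; linarith
    have hnear := (hasDerivAt_riccatiSubsolution hν0.ne' 0).continuousAt.eventually_lt_const hlt
    exact ((hnear.filter_mono nhdsWithin_le_nhds).and (Ioc_mem_nhdsGT hx)).exists
  refine image_lt_of_deriv_lt_deriv_boundary
    (fun y _ => hasDerivAt_riccatiSubsolution hν0.ne' y)
    (fun y hy => hasDerivAt_besselIRatio hν0.le (hδ.trans_le hy.1))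
    (hgδ.trans (lt_besselIRatio hν0.le hδ)) (fun y hy heq => ?_) ⟨hδx, le_rfl⟩
  have hy0 : 0 < y := hδ.trans_le hy.1
  rw [← heq]
  exact riccatiSubsolution_deriv_lt hν hy0 ((pow_le_pow_left₀ hy0.le hy.2 2).trans hx2)
    (heq ▸ lt_besselIRatio hν0.le hy0)
end

section
/- Let ν be any real number. Then x · K_ν′(x)/K_ν(x) tends to −|ν| as x tends to 0 from the right, where K_ν′ denotes the derivative of K_ν with respect to x. -/
/-!
Differentiating under the integral sign and integrating `t ↦ e^{-x cosh t} sinh (ν t)` by parts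
give `x K_ν'(x) + ν K_ν(x) = -x K_{ν-1}(x)`. Since `K_ν` is even in `ν`, take `a = |ν|`; it remains
to show `x K_{a-1}(x) = o(K_a(x))` as `x → 0⁺`. Monotonicity of `K_μ` in `|μ|`, together with
`x K_1(x) ≤ x K_0(x) + e^{-x}` (from `cosh t - 1 ≤ sinh t`), gives `x K_{a-1}(x) ≤ 1 + x K_a(x)`,
and `K_a(x) ≥ K_0(x) ≥ -log x / e` tends to infinity.
-/

open Real

open MeasureTheory Set Filter Topology

lemma sq_div_four_le_cosh (t : ℝ) : t ^ 2 / 4 ≤ cosh t := by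
  rw [← cosh_abs, cosh_eq, ← sq_abs]
  nlinarith [quadratic_le_exp_of_nonneg (abs_nonneg t), exp_pos (-|t|), abs_nonneg t]

lemma cosh_mul_le_exp_mul {t : ℝ} (ht : 0 ≤ t) (a : ℝ) : cosh (a * t) ≤ exp (|a| * t) := by
  rw [← cosh_abs, abs_mul, abs_of_nonneg ht, cosh_eq]
  nlinarith [exp_le_exp.2 (by nlinarith [abs_nonneg a] : -(|a| * t) ≤ |a| * t)]

lemma abs_sinh_le_cosh (t : ℝ) : |sinh t| ≤ cosh t := by
  rw [abs_sinh, ← cosh_abs]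
  exact (sinh_lt_cosh _).le

lemma exp_mul_mul_exp_neg_mul_cosh_le {x : ℝ} (hx : 0 < x) (c t : ℝ) :
    exp (c * t) * exp (-x * cosh t) ≤ exp ((c + 1) ^ 2 / x) * exp (-t) := by
  rw [← exp_add, ← exp_add, exp_le_exp]
  have hsq : (c + 1) * t - x * t ^ 2 / 4 ≤ (c + 1) ^ 2 / x := by
    rw [le_div_iff₀ hx]
    nlinarith [sq_nonneg (x * t / 2 - (c + 1))]
  nlinarith [mul_le_mul_of_nonneg_left (sq_div_four_le_cosh t) hx.le]

section DecayingIntegrand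

variable {x c : ℝ} {g : ℝ → ℝ}

lemma integrableOn_exp_neg_mul_cosh_mul (hx : 0 < x) (hg : Continuous g)
    (hgc : ∀ t, 0 ≤ t → |g t| ≤ exp (c * t)) :
    IntegrableOn (fun t => exp (-x * cosh t) * g t) (Ioi 0) := by
  have hdom := (exp_neg_integrableOn_Ioi 0 one_pos).const_mul (exp ((c + 1) ^ 2 / x))
  refine hdom.mono' (by fun_prop) ?_
  filter_upwards [ae_restrict_mem measurableSet_Ioi] with t ht
  rw [norm_mul, norm_of_nonneg (exp_pos _).le, Real.norm_eq_abs, mul_comm, neg_one_mul]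
  calc |g t| * exp (-x * cosh t) ≤ exp (c * t) * exp (-x * cosh t) := by
        gcongr; exact hgc t (le_of_lt ht)
    _ ≤ _ := exp_mul_mul_exp_neg_mul_cosh_le hx c t

lemma tendsto_exp_neg_mul_cosh_mul_atTop (hx : 0 < x)
    (hgc : ∀ t, 0 ≤ t → |g t| ≤ exp (c * t)) :
    Tendsto (fun t => exp (-x * cosh t) * g t) atTop (𝓝 0) := by
  have hdom := tendsto_exp_neg_atTop_nhds_zero.const_mul (exp ((c + 1) ^ 2 / x))
  rw [mul_zero] at hdom
  refine squeeze_zero_norm' ?_ hdom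
  filter_upwards [eventually_ge_atTop 0] with t ht
  rw [norm_mul, norm_of_nonneg (exp_pos _).le, Real.norm_eq_abs, mul_comm]
  calc |g t| * exp (-x * cosh t) ≤ exp (c * t) * exp (-x * cosh t) := by
        gcongr; exact hgc t ht
    _ ≤ _ := exp_mul_mul_exp_neg_mul_cosh_le hx c t

end DecayingIntegrand

section BesselK

variable {x : ℝ}

lemma integrableOn_besselK_integrand (ν : ℝ) (hx : 0 < x) :
    IntegrableOn (fun t => exp (-x * cosh t) * cosh (ν * t)) (Ioi 0) :=
  integrableOn_exp_neg_mul_cosh_mul hx (by fun_prop) fun t ht => by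
    rw [abs_of_pos (cosh_pos _)]; exact cosh_mul_le_exp_mul ht ν

lemma integrableOn_exp_neg_mul_cosh_mul_sinh (hx : 0 < x) :
    IntegrableOn (fun t => exp (-x * cosh t) * sinh t) (Ioi 0) :=
  integrableOn_exp_neg_mul_cosh_mul (c := 1) hx continuous_sinh fun t ht =>
    (abs_sinh_le_cosh t).trans (by simpa using cosh_mul_le_exp_mul ht 1)

lemma exp_neg_mul_cosh_mul_cosh_mul_cosh (ν x : ℝ) :
    (fun t => exp (-x * cosh t) * (cosh t * cosh (ν * t))) = fun t =>
      (exp (-x * cosh t) * cosh ((ν + 1) * t) + exp (-x * cosh t) * cosh ((ν - 1) * t)) / 2 := by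
  ext t; rw [add_mul, sub_mul, one_mul, cosh_add, cosh_sub]; ring

lemma exp_neg_mul_cosh_mul_sinh_mul_sinh (ν x : ℝ) :
    (fun t => exp (-x * cosh t) * (sinh t * sinh (ν * t))) = fun t =>
      (exp (-x * cosh t) * cosh ((ν + 1) * t) - exp (-x * cosh t) * cosh ((ν - 1) * t)) / 2 := by
  ext t; rw [add_mul, sub_mul, one_mul, cosh_add, cosh_sub]; ring

lemma integrableOn_exp_neg_mul_cosh_mul_cosh_mul_cosh (ν : ℝ) (hx : 0 < x) :
    IntegrableOn (fun t => exp (-x * cosh t) * (cosh t * cosh (ν * t))) (Ioi 0) := by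
  rw [exp_neg_mul_cosh_mul_cosh_mul_cosh]
  exact ((integrableOn_besselK_integrand _ hx).add (integrableOn_besselK_integrand _ hx)).div_const 2

lemma integral_exp_neg_mul_cosh_mul_cosh_mul_cosh (ν : ℝ) (hx : 0 < x) :
    ∫ t in Ioi 0, exp (-x * cosh t) * (cosh t * cosh (ν * t)) =
      (besselK (ν + 1) x + besselK (ν - 1) x) / 2 := by
  rw [exp_neg_mul_cosh_mul_cosh_mul_cosh, integral_div, integral_add
    (integrableOn_besselK_integrand _ hx) (integrableOn_besselK_integrand _ hx)]
  rfl

lemma integrableOn_exp_neg_mul_cosh_mul_sinh_mul_sinh (ν : ℝ) (hx : 0 < x) :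
    IntegrableOn (fun t => exp (-x * cosh t) * (sinh t * sinh (ν * t))) (Ioi 0) := by
  rw [exp_neg_mul_cosh_mul_sinh_mul_sinh]
  exact ((integrableOn_besselK_integrand _ hx).sub (integrableOn_besselK_integrand _ hx)).div_const 2

lemma integral_exp_neg_mul_cosh_mul_sinh_mul_sinh (ν : ℝ) (hx : 0 < x) :
    ∫ t in Ioi 0, exp (-x * cosh t) * (sinh t * sinh (ν * t)) =
      (besselK (ν + 1) x - besselK (ν - 1) x) / 2 := by
  rw [exp_neg_mul_cosh_mul_sinh_mul_sinh, integral_div, integral_sub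
    (integrableOn_besselK_integrand _ hx) (integrableOn_besselK_integrand _ hx)]
  rfl

lemma besselK_neg (ν : ℝ) : besselK (-ν) = besselK ν := by
  ext x; simp only [besselK, neg_mul, cosh_neg]

lemma besselK_abs (ν : ℝ) : besselK |ν| = besselK ν := by
  rcases abs_choice ν with h | h <;> rw [h]
  exact besselK_neg ν

lemma besselK_nonneg (ν x : ℝ) : 0 ≤ besselK ν x :=
  setIntegral_nonneg measurableSet_Ioi fun _ _ => by positivity

lemma besselK_le_besselK {μ ν : ℝ} (h : |μ| ≤ |ν|) (hx : 0 < x) :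
    besselK μ x ≤ besselK ν x := by
  refine setIntegral_mono_on (integrableOn_besselK_integrand μ hx)
    (integrableOn_besselK_integrand ν hx) measurableSet_Ioi fun t ht => ?_
  gcongr
  rw [cosh_le_cosh, abs_mul, abs_mul]
  gcongr

lemma hasDerivAt_besselK (ν : ℝ) (hx : 0 < x) :
    HasDerivAt (besselK ν) (-(besselK (ν + 1) x + besselK (ν - 1) x) / 2) x := by
  have key := hasDerivAt_integral_of_dominated_loc_of_deriv_le (μ := volume.restrict (Ioi 0))
    (F := fun y t => exp (-y * cosh t) * cosh (ν * t))
    (F' := fun y t => -(exp (-y * cosh t) * (cosh t * cosh (ν * t)))) (x₀ := x)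
    (bound := fun t => exp (-(x / 2) * cosh t) * (cosh t * cosh (ν * t)))
    (Metric.ball_mem_nhds x (half_pos hx)) (Eventually.of_forall fun y => (by fun_prop))
    (integrableOn_besselK_integrand ν hx) (by fun_prop) ?_
    (integrableOn_exp_neg_mul_cosh_mul_cosh_mul_cosh ν (half_pos hx)) ?_
  · rw [integral_neg, integral_exp_neg_mul_cosh_mul_cosh_mul_cosh ν hx, ← neg_div] at key
    exact key.2
  · refine Eventually.of_forall fun t y hy => ?_
    have hy : x / 2 < y := by
      have := (abs_lt.1 (mem_ball_iff_norm.1 hy)).1; linarith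
    rw [norm_neg, norm_of_nonneg (by positivity)]
    gcongr
  · refine Eventually.of_forall fun t y _ => ?_
    exact ((((hasDerivAt_neg y).mul_const (cosh t)).exp).mul_const (cosh (ν * t))).congr_deriv
      (by ring)

end BesselK

section Recurrence

variable {x : ℝ}

lemma mul_besselK_add_one_sub_besselK_sub_one (ν : ℝ) (hx : 0 < x) :
    x * (besselK (ν + 1) x - besselK (ν - 1) x) = 2 * ν * besselK ν x := by
  -- `t ↦ e^{-x cosh t} sinh (ν t)` vanishes at `0` and at `∞`, so its derivative integrates to `0`.
  have hderiv : ∀ t, HasDerivAt (fun t => exp (-x * cosh t) * sinh (ν * t))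
      (ν * (exp (-x * cosh t) * cosh (ν * t)) -
        x * (exp (-x * cosh t) * (sinh t * sinh (ν * t)))) t := fun t =>
    ((((hasDerivAt_cosh t).const_mul (-x)).exp).mul
      ((hasDerivAt_id t).const_mul ν).sinh).congr_deriv (by simp only [id]; ring)
  have hint₁ := (integrableOn_besselK_integrand ν hx).const_mul ν
  have hint₂ := (integrableOn_exp_neg_mul_cosh_mul_sinh_mul_sinh ν hx).const_mul x
  have hlim := tendsto_exp_neg_mul_cosh_mul_atTop (c := |ν|) hx fun t ht =>
    (abs_sinh_le_cosh _).trans (cosh_mul_le_exp_mul ht ν)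
  have hftc := integral_Ioi_of_hasDerivAt_of_tendsto (hderiv 0).continuousAt.continuousWithinAt
    (fun t _ => hderiv t) (hint₁.sub hint₂) hlim
  rw [integral_sub hint₁ hint₂, integral_const_mul, integral_const_mul,
    integral_exp_neg_mul_cosh_mul_sinh_mul_sinh ν hx] at hftc
  simp only [mul_zero, sinh_zero, sub_zero] at hftc
  change ν * besselK ν x - _ = 0 at hftc
  linarith

lemma mul_deriv_besselK_add_mul_besselK (ν : ℝ) (hx : 0 < x) :
    x * deriv (besselK ν) x + ν * besselK ν x = -(x * besselK (ν - 1) x) := by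
  rw [(hasDerivAt_besselK ν hx).deriv]
  linarith [mul_besselK_add_one_sub_besselK_sub_one ν hx]

lemma mul_integral_exp_neg_mul_cosh_mul_sinh (hx : 0 < x) :
    x * ∫ t in Ioi 0, exp (-x * cosh t) * sinh t = exp (-x) := by
  have hderiv : ∀ t, HasDerivAt (fun t => -exp (-x * cosh t))
      (x * (exp (-x * cosh t) * sinh t)) t := fun t =>
    (((hasDerivAt_cosh t).const_mul (-x)).exp.neg).congr_deriv (by ring)
  have hint := (integrableOn_exp_neg_mul_cosh_mul_sinh hx).const_mul x
  have hlim := (tendsto_exp_neg_mul_cosh_mul_atTop (g := 1) (c := 0) hx fun t _ => by simp).neg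
  have hftc := integral_Ioi_of_hasDerivAt_of_tendsto (hderiv 0).continuousAt.continuousWithinAt
    (fun t _ => hderiv t) hint (by simpa using hlim)
  rw [integral_const_mul] at hftc
  simpa using hftc

end Recurrence

section SmallArgument

variable {x : ℝ}

lemma mul_besselK_one_le (hx : 0 < x) : x * besselK 1 x ≤ 1 + x * besselK 0 x := by
  have hS := integrableOn_exp_neg_mul_cosh_mul_sinh hx
  have hle : besselK 1 x ≤ (∫ t in Ioi 0, exp (-x * cosh t) * sinh t) + besselK 0 x := by
    rw [besselK, besselK, ← integral_add hS (integrableOn_besselK_integrand 0 hx)]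
    refine setIntegral_mono_on (integrableOn_besselK_integrand 1 hx)
      (hS.add (integrableOn_besselK_integrand 0 hx)) measurableSet_Ioi fun t ht => ?_
    rw [one_mul, zero_mul, cosh_zero, ← mul_add]
    gcongr
    linarith [cosh_sub_sinh t, exp_le_one_iff.2 (neg_nonpos.2 (le_of_lt ht))]
  calc x * besselK 1 x ≤ x * ((∫ t in Ioi 0, exp (-x * cosh t) * sinh t) + besselK 0 x) := by
        gcongr
    _ = exp (-x) + x * besselK 0 x := by rw [mul_add, mul_integral_exp_neg_mul_cosh_mul_sinh hx]
    _ ≤ 1 + x * besselK 0 x := by gcongr; exact exp_le_one_iff.2 (neg_nonpos.2 hx.le)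

lemma mul_besselK_sub_one_le {a : ℝ} (ha : 0 ≤ a) (hx : 0 < x) :
    x * besselK (a - 1) x ≤ 1 + x * besselK a x := by
  rcases le_total 1 a with h | h
  · have hK : besselK (a - 1) x ≤ besselK a x := besselK_le_besselK
      (by rw [abs_of_nonneg (by linarith), abs_of_nonneg ha]; linarith) hx
    linarith [mul_le_mul_of_nonneg_left hK hx.le]
  · calc x * besselK (a - 1) x ≤ x * besselK 1 x := by
          gcongr
          exact besselK_le_besselK (by rw [abs_of_nonpos (by linarith), abs_one]; linarith) hx
      _ ≤ 1 + x * besselK 0 x := mul_besselK_one_le hx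
      _ ≤ 1 + x * besselK a x := by
          gcongr
          exact besselK_le_besselK (by simp) hx

lemma exp_neg_one_mul_neg_log_le_besselK_zero (hx : 0 < x) :
    exp (-1) * -log x ≤ besselK 0 x := by
  have hpt : ∀ t ∈ Ioc 0 (-log x), exp (-1) ≤ exp (-x * cosh t) * cosh (0 * t) := by
    intro t ht
    rw [zero_mul, cosh_zero, mul_one, exp_le_exp, neg_mul, neg_le_neg_iff]
    calc x * cosh t ≤ x * exp (-log x) := by
          gcongr
          exact (by simpa using cosh_mul_le_exp_mul ht.1.le 1 : cosh t ≤ exp t).trans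
            (exp_le_exp.2 ht.2)
      _ = 1 := by rw [exp_neg, exp_log hx, mul_inv_cancel₀ hx.ne']
  calc exp (-1) * -log x ≤ ∫ t in Ioc 0 (-log x), exp (-1) := by
        rw [setIntegral_const, Real.volume_real_Ioc, smul_eq_mul, mul_comm, sub_zero]
        gcongr
        exact le_max_left _ _
    _ ≤ ∫ t in Ioc 0 (-log x), exp (-x * cosh t) * cosh (0 * t) :=
        setIntegral_mono_on (integrableOn_const measure_Ioc_lt_top.ne)
          ((integrableOn_besselK_integrand 0 hx).mono_set Ioc_subset_Ioi_self) measurableSet_Ioc hpt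
    _ ≤ besselK 0 x :=
        setIntegral_mono_set (integrableOn_besselK_integrand 0 hx)
          (Eventually.of_forall fun t => by positivity)
          (Eventually.of_forall Ioc_subset_Ioi_self)

lemma tendsto_besselK_nhdsGT_zero (ν : ℝ) : Tendsto (besselK ν) (𝓝[>] 0) atTop := by
  have hlog : Tendsto (fun x => exp (-1) * -log x) (𝓝[>] 0) atTop :=
    (tendsto_neg_atBot_atTop.comp tendsto_log_nhdsGT_zero).const_mul_atTop (exp_pos _)
  refine tendsto_atTop_mono' _ ?_ hlog
  filter_upwards [self_mem_nhdsWithin] with x hx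
  exact (exp_neg_one_mul_neg_log_le_besselK_zero hx).trans (besselK_le_besselK (by simp) hx)

lemma tendsto_mul_besselK_sub_one_div_besselK {a : ℝ} (ha : 0 ≤ a) :
    Tendsto (fun x => x * besselK (a - 1) x / besselK a x) (𝓝[>] 0) (𝓝 0) := by
  have hK := tendsto_besselK_nhdsGT_zero a
  have hupper : Tendsto (fun x => x + (besselK a x)⁻¹) (𝓝[>] 0) (𝓝 0) := by
    simpa using (tendsto_nhdsWithin_of_tendsto_nhds tendsto_id).add hK.inv_tendsto_atTop
  refine tendsto_of_tendsto_of_tendsto_of_le_of_le' tendsto_const_nhds hupper ?_ ?_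
  · filter_upwards [self_mem_nhdsWithin] with x hx
    exact div_nonneg (mul_nonneg hx.le (besselK_nonneg _ _)) (besselK_nonneg _ _)
  · filter_upwards [self_mem_nhdsWithin, hK.eventually_gt_atTop 0] with x hx hKpos
    rw [div_le_iff₀ hKpos, add_mul, inv_mul_cancel₀ hKpos.ne']
    linarith [mul_besselK_sub_one_le ha hx]

end SmallArgument

theorem besselK_logDeriv_tendsto_zero (ν : ℝ) :
    Filter.Tendsto (fun x : ℝ => x * deriv (besselK ν) x / besselK ν x)
      (nhdsWithin 0 (Set.Ioi 0)) (nhds (-|ν|)) := by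
  rw [← besselK_abs ν]
  have hE := (tendsto_mul_besselK_sub_one_div_besselK (abs_nonneg ν)).neg.sub_const |ν|
  rw [neg_zero, zero_sub] at hE
  refine hE.congr' ?_
  filter_upwards [self_mem_nhdsWithin, (tendsto_besselK_nhdsGT_zero |ν|).eventually_gt_atTop 0]
    with x hx hKpos
  field_simp
  linarith [mul_deriv_besselK_add_mul_besselK |ν| hx]
end
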